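/- arXiv:2305.01254 — 8 statements merged into one kernel-verified Lean document; each statement's English description precedes it below -/
import Mathlib

section
/- Let F(s) = (M s² + D s + K)^{-1}. For every integer k ≥ 2, the k-th derivative of F satisfies F^{(k)}(s) = -k F(s)(2 M s + D) F^{(k-1)}(s) - (k(k-1)/2)·2·F(s) M F^{(k-2)}(s), i.e. F^{(k)}(s) = -k F(s)(2Ms+D)F^{(k-1)}(s) - k(k-1) F(s) M F^{(k-2)}(s). -/
open Matrix

namespace QuadPencilAux

variable {n : ℕ}

lemma contDiff_entry_det {f : ℂ → Matrix (Fin n) (Fin n) ℂ}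
    (h : ∀ i j, ContDiff ℂ ⊤ fun s => f s i j) :
    ContDiff ℂ ⊤ fun s => (f s).det := by
  simp only [Matrix.det_apply, Units.smul_def, zsmul_eq_mul]
  exact ContDiff.sum fun σ _ =>
    contDiff_const.mul (contDiff_prod fun i _ => h (σ i) i)

variable (M D K : Matrix (Fin n) (Fin n) ℂ)

noncomputable def A (s : ℂ) : Matrix (Fin n) (Fin n) ℂ := s ^ 2 • M + s • D + K

noncomputable def U : Set ℂ := {s | IsUnit ((A M D K s).det)}

lemma A_apply (s : ℂ) (i j : Fin n) :
    A M D K s i j = s ^ 2 * M i j + s * D i j + K i j := by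
  simp [A, Matrix.add_apply, Matrix.smul_apply, smul_eq_mul]

lemma contDiff_A_entry (i j : Fin n) : ContDiff ℂ ⊤ fun s => A M D K s i j := by
  simp only [A_apply]
  exact (((contDiff_id.pow 2).mul contDiff_const).add
    (contDiff_id.mul contDiff_const)).add contDiff_const

lemma contDiff_detA : ContDiff ℂ ⊤ fun s => (A M D K s).det :=
  contDiff_entry_det (contDiff_A_entry M D K)

lemma isOpen_U : IsOpen (U M D K) := by
  have : U M D K = (fun s => (A M D K s).det) ⁻¹' {(0 : ℂ)}ᶜ := by
    ext s; simp [U, isUnit_iff_ne_zero]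
  rw [this]
  exact isOpen_compl_singleton.preimage (contDiff_detA M D K).continuous

lemma contDiff_adj_entry (i j : Fin n) :
    ContDiff ℂ ⊤ fun s => (A M D K s).adjugate i j := by
  simp only [Matrix.adjugate_apply]
  apply contDiff_entry_det
  intro a b
  simp only [Matrix.updateRow_apply]
  split_ifs with h
  · exact contDiff_const
  · exact contDiff_A_entry M D K a b

lemma contDiffOn_inv_entry (i j : Fin n) :
    ContDiffOn ℂ ⊤ (fun s => (A M D K s)⁻¹ i j) (U M D K) := by
  have heq : (fun s => (A M D K s)⁻¹ i j)
      = fun s => ((A M D K s).det)⁻¹ * (A M D K s).adjugate i j := by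
    funext s
    rw [Matrix.inv_def]
    simp [Matrix.smul_apply, Ring.inverse_eq_inv, smul_eq_mul]
  rw [heq]
  exact (((contDiff_detA M D K).contDiffOn).inv
    (fun s hs => (isUnit_iff_ne_zero.mp hs))).mul (contDiff_adj_entry M D K i j).contDiffOn

lemma diffAt_iteratedDeriv {f : ℂ → ℂ} {V : Set ℂ} (hV : IsOpen V)
    (hf : ContDiffOn ℂ ⊤ f V) (k : ℕ) {s : ℂ} (hs : s ∈ V) :
    DifferentiableAt ℂ (iteratedDeriv k f) s := by
  have h1 : DifferentiableOn ℂ (iteratedDerivWithin k f V) V :=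
    hf.differentiableOn_iteratedDerivWithin (by exact_mod_cast lt_top_iff_ne_top.mpr (by simp)) hV.uniqueDiffOn
  have heq : ∀ t ∈ V, iteratedDerivWithin k f V t = iteratedDeriv k f t := by
    intro t ht
    rw [iteratedDerivWithin_eq_iteratedFDerivWithin, iteratedDeriv_eq_iteratedFDeriv,
      iteratedFDerivWithin_of_isOpen k hV ht]
  have h2 : DifferentiableAt ℂ (iteratedDerivWithin k f V) s :=
    h1.differentiableAt (hV.mem_nhds hs)
  exact h2.congr_of_eventuallyEq <| by
    filter_upwards [hV.mem_nhds hs] with t ht using (heq t ht).symm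

noncomputable def g (i j : Fin n) (m : ℕ) : ℂ → ℂ :=
  iteratedDeriv m (fun s => (A M D K s)⁻¹ i j)

lemma hg_diff (i j : Fin n) (m : ℕ) {s : ℂ} (hs : s ∈ U M D K) :
    DifferentiableAt ℂ (g M D K i j m) s :=
  diffAt_iteratedDeriv (isOpen_U M D K) (contDiffOn_inv_entry M D K i j) m hs

lemma hg_hasDeriv (i j : Fin n) (m : ℕ) {s : ℂ} (hs : s ∈ U M D K) :
    HasDerivAt (g M D K i j m) (g M D K i j (m + 1) s) s := by
  have h := (hg_diff M D K i j m hs).hasDerivAt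
  have h2 : deriv (g M D K i j m) s = g M D K i j (m + 1) s := by
    rw [g, g, iteratedDeriv_succ]
  rwa [h2] at h

lemma main (j : Fin n) : ∀ (k : ℕ), ∀ s ∈ U M D K, ∀ i,
    (∑ l, A M D K s i l * g M D K l j k s)
      + (k : ℂ) * (∑ l, (2 * s * M i l + D i l) * g M D K l j (k - 1) s)
      + ((k : ℂ) * ((k : ℂ) - 1)) * (∑ l, M i l * g M D K l j (k - 2) s)
      = if k = 0 then (1 : Matrix (Fin n) (Fin n) ℂ) i j else 0 := by
  intro k
  induction k with
  | zero =>
    intro s hs i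
    simp only [Nat.cast_zero, zero_mul, if_pos rfl, zero_sub, mul_zero, add_zero]
    have hg0 : ∀ l, g M D K l j 0 s = (A M D K s)⁻¹ l j := by
      intro l; rw [g, iteratedDeriv_zero]
    have : (∑ l, A M D K s i l * g M D K l j 0 s)
        = (A M D K s * (A M D K s)⁻¹) i j := by
      rw [Matrix.mul_apply]
      exact Finset.sum_congr rfl fun l _ => by rw [hg0 l]
    rw [this, Matrix.mul_nonsing_inv _ hs]
    simp
  | succ k IH =>
    intro s hs i
    have hA' : ∀ l : Fin n, HasDerivAt (fun t => A M D K t i l)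
        (2 * s * M i l + D i l) s := by
      intro l
      have hfun : (fun t => A M D K t i l)
          = fun t : ℂ => t ^ 2 * M i l + t * D i l + K i l :=
        funext fun t => A_apply M D K t i l
      rw [hfun]
      have h1 := (((hasDerivAt_pow 2 s).mul_const (M i l)).add
        ((hasDerivAt_id s).mul_const (D i l))).add_const (K i l)
      refine h1.congr_deriv ?_
      push_cast
      ring
    have h2t : ∀ l : Fin n, HasDerivAt (fun t : ℂ => 2 * t * M i l + D i l)
        (2 * M i l) s := by
      intro l
      have h1 := (((hasDerivAt_id s).const_mul (2 : ℂ)).mul_const (M i l)).add_const (D i l)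
      refine h1.congr_deriv ?_
      ring
    have hraw : HasDerivAt (fun t =>
        (∑ l, A M D K t i l * g M D K l j k t)
          + (k : ℂ) * (∑ l, (2 * t * M i l + D i l) * g M D K l j (k - 1) t)
          + ((k : ℂ) * ((k : ℂ) - 1)) * (∑ l, M i l * g M D K l j (k - 2) t))
        ((∑ l, ((2 * s * M i l + D i l) * g M D K l j k s
            + A M D K s i l * g M D K l j (k + 1) s))
          + (k : ℂ) * (∑ l, (2 * M i l * g M D K l j (k - 1) s
            + (2 * s * M i l + D i l) * g M D K l j (k - 1 + 1) s))
          + ((k : ℂ) * ((k : ℂ) - 1)) * (∑ l, M i l * g M D K l j (k - 2 + 1) s)) s := by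
      refine HasDerivAt.add (HasDerivAt.add ?_ ?_) ?_
      · exact HasDerivAt.fun_sum fun l _ => (hA' l).mul (hg_hasDeriv M D K l j k hs)
      · exact (HasDerivAt.fun_sum fun l _ =>
          (h2t l).mul (hg_hasDeriv M D K l j (k - 1) hs)).const_mul _
      · exact (HasDerivAt.fun_sum fun l _ =>
          (hg_hasDeriv M D K l j (k - 2) hs).const_mul (M i l)).const_mul _
    have hev : (fun t =>
        (∑ l, A M D K t i l * g M D K l j k t)
          + (k : ℂ) * (∑ l, (2 * t * M i l + D i l) * g M D K l j (k - 1) t)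
          + ((k : ℂ) * ((k : ℂ) - 1)) * (∑ l, M i l * g M D K l j (k - 2) t))
        =ᶠ[nhds s] (fun _ => if k = 0 then (1 : Matrix (Fin n) (Fin n) ℂ) i j else 0) := by
      filter_upwards [(isOpen_U M D K).mem_nhds hs] with t ht using IH t ht i
    have hval : (∑ l, ((2 * s * M i l + D i l) * g M D K l j k s
            + A M D K s i l * g M D K l j (k + 1) s))
          + (k : ℂ) * (∑ l, (2 * M i l * g M D K l j (k - 1) s
            + (2 * s * M i l + D i l) * g M D K l j (k - 1 + 1) s))
          + ((k : ℂ) * ((k : ℂ) - 1)) * (∑ l, M i l * g M D K l j (k - 2 + 1) s) = 0 := by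
      rw [← hraw.deriv, hev.deriv_eq, deriv_const]
    have hsum2 : (∑ l, 2 * M i l * g M D K l j (k - 1) s)
        = 2 * ∑ l, M i l * g M D K l j (k - 1) s := by
      rw [Finset.mul_sum]
      exact Finset.sum_congr rfl fun l _ => mul_assoc _ _ _
    rw [Finset.sum_add_distrib, Finset.sum_add_distrib, hsum2] at hval
    rw [if_neg (Nat.succ_ne_zero k)]
    match k with
    | 0 =>
      norm_num at hval ⊢
      linear_combination hval
    | 1 =>
      norm_num at hval ⊢
      linear_combination hval
    | (k'' + 2) =>
      have e1 : k'' + 2 - 1 = k'' + 1 := rfl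
      have e2 : k'' + 2 - 2 = k'' := rfl
      have e3 : k'' + 2 + 1 - 1 = k'' + 2 := rfl
      have e4 : k'' + 2 + 1 - 2 = k'' + 1 := rfl
      rw [e1, e2] at hval
      rw [e3, e4]
      push_cast at hval ⊢
      linear_combination hval

end QuadPencilAux

/-- For k ≥ 2, the k-th derivative of F(s) = (M s² + D s + K)⁻¹ satisfies
F⁽ᵏ⁾(s) = -k F(s)(2Ms+D)F⁽ᵏ⁻¹⁾(s) - k(k-1) F(s) M F⁽ᵏ⁻²⁾(s). -/
theorem iteratedDeriv_inv_quadratic_pencil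
    {n : ℕ} (M D K : Matrix (Fin n) (Fin n) ℂ) (s₀ : ℂ)
    (hinv : ∀ᶠ s in nhds s₀, IsUnit ((s ^ 2 • M + s • D + K).det))
    (k : ℕ) (hk : 2 ≤ k)
    (Fd : ℕ → Matrix (Fin n) (Fin n) ℂ)
    (hFd : ∀ m, Fd m = Matrix.of fun i j =>
      iteratedDeriv m (fun s : ℂ => ((s ^ 2 • M + s • D + K)⁻¹) i j) s₀) :
    Fd k = -((k : ℂ) • ((s₀ ^ 2 • M + s₀ • D + K)⁻¹ * ((2 * s₀) • M + D) * Fd (k - 1)))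
      - ((k : ℂ) * ((k : ℂ) - 1)) • ((s₀ ^ 2 • M + s₀ • D + K)⁻¹ * M * Fd (k - 2)) := by
  have hs₀ : s₀ ∈ QuadPencilAux.U M D K := hinv.self_of_nhds
  have hFdg : ∀ (m : ℕ) (l j : Fin n), Fd m l j = QuadPencilAux.g M D K l j m s₀ := by
    intro m l j
    rw [hFd m]
    rfl
  have hmat : (s₀ ^ 2 • M + s₀ • D + K) * Fd k
      + (k : ℂ) • (((2 * s₀) • M + D) * Fd (k - 1))
      + ((k : ℂ) * ((k : ℂ) - 1)) • (M * Fd (k - 2)) = 0 := by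
    ext i j
    have hmain := QuadPencilAux.main M D K j k s₀ hs₀ i
    rw [if_neg (by omega : ¬ k = 0)] at hmain
    simp only [QuadPencilAux.A_apply] at hmain
    simp only [Matrix.add_apply, Matrix.smul_apply, Matrix.mul_apply, Matrix.zero_apply,
      smul_eq_mul, hFdg, Finset.mul_sum]
    rw [Finset.mul_sum, Finset.mul_sum] at hmain
    exact hmain
  have hAX : (s₀ ^ 2 • M + s₀ • D + K) * Fd k
      = -((k : ℂ) • (((2 * s₀) • M + D) * Fd (k - 1)))
        - ((k : ℂ) * ((k : ℂ) - 1)) • (M * Fd (k - 2)) := by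
    rw [add_assoc] at hmat
    rw [eq_neg_of_add_eq_zero_left hmat]
    abel
  have hFA : (s₀ ^ 2 • M + s₀ • D + K)⁻¹ * (s₀ ^ 2 • M + s₀ • D + K) = 1 :=
    Matrix.nonsing_inv_mul _ hs₀
  calc Fd k = ((s₀ ^ 2 • M + s₀ • D + K)⁻¹ * (s₀ ^ 2 • M + s₀ • D + K)) * Fd k := by
        rw [hFA, one_mul]
    _ = (s₀ ^ 2 • M + s₀ • D + K)⁻¹ * ((s₀ ^ 2 • M + s₀ • D + K) * Fd k) := by
        rw [Matrix.mul_assoc]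
    _ = _ := by
        rw [hAX, Matrix.mul_sub, Matrix.mul_neg, Matrix.mul_smul, Matrix.mul_smul,
          ← Matrix.mul_assoc, ← Matrix.mul_assoc]
end

section
/- If M, D, K are real symmetric positive definite n×n matrices, then every root λ of det(M λ² + D λ + K) = 0 has negative real part (i.e., the second-order system M ẍ + D ẋ + K x = 0 is asymptotically stable). -/
open Matrix

/-- scalar lemma -/
lemma scalar_quad_stable {m d k : ℝ} (hm : 0 < m) (hd : 0 < d) (hk : 0 < k)
    {lam : ℂ} (h : (m : ℂ) * lam ^ 2 + (d : ℂ) * lam + (k : ℂ) = 0) : lam.re < 0 := by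
  set x := lam.re
  set y := lam.im
  have hre : m * (x^2 - y^2) + d * x + k = 0 := by
    have := congrArg Complex.re h
    simp [Complex.add_re, Complex.mul_re, Complex.ofReal_re, Complex.ofReal_im, pow_two,
      Complex.mul_im, x, y] at this
    nlinarith [this]
  have him : y * (2 * m * x + d) = 0 := by
    have := congrArg Complex.im h
    simp [Complex.add_im, Complex.mul_im, Complex.mul_re, Complex.ofReal_re, Complex.ofReal_im,
      pow_two, x, y] at this
    nlinarith [this]
  rcases mul_eq_zero.mp him with hy | hxy
  · by_contra hx
    push_neg at hx
    rw [hy] at hre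
    nlinarith [sq_nonneg x]
  · nlinarith

open scoped MatrixOrder in
/-- positivity of complex quadratic form of real posdef matrix -/
lemma posdef_complex_form {n : ℕ} {M : Matrix (Fin n) (Fin n) ℝ} (hM : M.PosDef)
    {x : Fin n → ℂ} (hx : x ≠ 0) :
    0 < (star x ⬝ᵥ (M.map (fun r => (r : ℂ))) *ᵥ x).re ∧
      (star x ⬝ᵥ (M.map (fun r => (r : ℂ))) *ᵥ x).im = 0 := by
  classical
  set B := CFC.sqrt M with hB
  have hBB : B * B = M := CFC.sqrt_mul_sqrt_self M hM.posSemidef.nonneg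
  have hBherm : B.IsHermitian := (Matrix.nonneg_iff_posSemidef.mp (CFC.sqrt_nonneg M)).1
  have hdetM : M.det ≠ 0 := hM.det_pos.ne'
  have hdetB : B.det ≠ 0 := by
    intro h
    apply hdetM
    rw [← hBB, det_mul, h, mul_zero]
  set c : ℝ →+* ℂ := Complex.ofRealHom
  set A : Matrix (Fin n) (Fin n) ℂ := B.map c
  have hMA : M.map (fun r => (r : ℂ)) = A * A := by
    rw [← hBB]
    exact Matrix.map_mul (f := c)
  have hAherm : A.IsHermitian := hBherm.map _ (by
    intro r
    simp [c])
  have hdetA : A.det ≠ 0 := by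
    show (c.mapMatrix B).det ≠ 0
    rw [← RingHom.map_det]
    simpa [c] using hdetB
  have hAx : A *ᵥ x ≠ 0 := by
    intro h
    exact hdetA (Matrix.exists_mulVec_eq_zero_iff.mp ⟨x, hx, h⟩)
  set y := A *ᵥ x with hy
  have key : star x ⬝ᵥ (M.map (fun r => (r : ℂ))) *ᵥ x = star y ⬝ᵥ y := by
    rw [hMA, ← mulVec_mulVec, dotProduct_mulVec, hy, star_mulVec, hAherm.eq]
  rw [key]
  have hsum : star y ⬝ᵥ y = ((∑ i, Complex.normSq (y i) : ℝ) : ℂ) := by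
    simp [dotProduct, Complex.normSq_eq_conj_mul_self]
  rw [hsum]
  have hpos : 0 < ∑ i, Complex.normSq (y i) := by
    obtain ⟨i, hi⟩ := Function.ne_iff.mp hAx
    exact Finset.sum_pos' (fun j _ => Complex.normSq_nonneg _)
      ⟨i, Finset.mem_univ i, Complex.normSq_pos.mpr hi⟩
  simpa using hpos

/-- If M, D, K are real symmetric positive definite, every root λ of
det(M λ² + D λ + K) = 0 has negative real part. -/
theorem quadratic_pencil_posdef_stable
    {n : ℕ} (M D K : Matrix (Fin n) (Fin n) ℝ)
    (hM : M.PosDef) (hD : D.PosDef) (hK : K.PosDef) (lam : ℂ)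
    (hroot : (lam ^ 2 • M.map (fun x => (x : ℂ)) + lam • D.map (fun x => (x : ℂ))
      + K.map (fun x => (x : ℂ))).det = 0) :
    lam.re < 0 := by
  classical
  obtain ⟨v, hv, hveq⟩ := Matrix.exists_mulVec_eq_zero_iff.mpr hroot
  have hMv := posdef_complex_form hM hv
  have hDv := posdef_complex_form hD hv
  have hKv := posdef_complex_form hK hv
  set a := star v ⬝ᵥ (M.map (fun r => (r : ℂ))) *ᵥ v with ha
  set b := star v ⬝ᵥ (D.map (fun r => (r : ℂ))) *ᵥ v with hb
  set k := star v ⬝ᵥ (K.map (fun r => (r : ℂ))) *ᵥ v with hk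
  have heq : lam ^ 2 * a + lam * b + k = 0 := by
    have : star v ⬝ᵥ ((lam ^ 2 • M.map (fun x => (x : ℂ)) + lam • D.map (fun x => (x : ℂ))
        + K.map (fun x => (x : ℂ))) *ᵥ v) = 0 := by rw [hveq, dotProduct_zero]
    simpa [add_mulVec, smul_mulVec, dotProduct_add, dotProduct_smul, smul_eq_mul,
      ha, hb, hk, mul_comm] using this
  have haC : a = ((a.re : ℝ) : ℂ) := by
    rw [Complex.ext_iff]
    simp [hMv.2]
  have hbC : b = ((b.re : ℝ) : ℂ) := by
    rw [Complex.ext_iff]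
    simp [hDv.2]
  have hkC : k = ((k.re : ℝ) : ℂ) := by
    rw [Complex.ext_iff]
    simp [hKv.2]
  apply scalar_quad_stable hMv.1 hDv.1 hKv.1 (lam := lam)
  rw [← haC, ← hbC, ← hkC, ← heq]
  ring
end

section
/- Under the assumptions of the pole placement theorem: if Π solves the Sylvester equation M Π S² + D Π S + K Π = B L, Υ_p solves Q_p² Υ_p M + Q_p Υ_p D + Υ_p K = R_p C_{p0} + Q_p R_p C_{p1} with C_{p0}Π = C_{p1}Π = 0, and F_2, F_1, G satisfy Υ_p Π F_2 = Υ_p M Π, Υ_p Π F_1 = Υ_p D Π, Υ_p Π G = Υ_p B, then for the reduced pencil ρ(λ) = λ² F_2 + λ F_1 + (G L − F_2 S² − F_1 S) one has the factorization Υ_p Π ρ(λ) = (λ I − Q_p)[(λ I + Q_p) Υ_p M Π + Υ_p D Π] for all λ ∈ ℂ. -/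
open Matrix

/-- Under the pole placement constraints, the reduced pencil
ρ(λ) = λ²F₂ + λF₁ + (GL − F₂S² − F₁S) satisfies
Υ_pPim ρ(λ) = (λI − Q_p)[(λI + Q_p)Υ_p M Pim + Υ_p D Pim] for all λ. -/
theorem poleplacement_factorization
    {n p ν κ q : ℕ} (M D K : Matrix (Fin n) (Fin n) ℂ)
    (B : Matrix (Fin n) (Fin p) ℂ) (L : Matrix (Fin p) (Fin ν) ℂ)
    (S : Matrix (Fin ν) (Fin ν) ℂ)
    (Qp : Matrix (Fin κ) (Fin κ) ℂ) (Rp : Matrix (Fin κ) (Fin q) ℂ)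
    (Cp0 Cp1 : Matrix (Fin q) (Fin n) ℂ)
    (Pim : Matrix (Fin n) (Fin ν) ℂ) (Υp : Matrix (Fin κ) (Fin n) ℂ)
    (F1 F2 : Matrix (Fin ν) (Fin ν) ℂ) (G : Matrix (Fin ν) (Fin p) ℂ)
    (hPim : M * Pim * S ^ 2 + D * Pim * S + K * Pim = B * L)
    (hΥp : Qp ^ 2 * Υp * M + Qp * Υp * D + Υp * K = Rp * Cp0 + Qp * Rp * Cp1)
    (h0 : Cp0 * Pim = 0) (h1 : Cp1 * Pim = 0)
    (hF2 : Υp * Pim * F2 = Υp * M * Pim)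
    (hF1 : Υp * Pim * F1 = Υp * D * Pim)
    (hG : Υp * Pim * G = Υp * B) :
    ∀ lam : ℂ,
      Υp * Pim * (lam ^ 2 • F2 + lam • F1 + (G * L - F2 * S ^ 2 - F1 * S))
        = (lam • (1 : Matrix (Fin κ) (Fin κ) ℂ) - Qp) *
          ((lam • (1 : Matrix (Fin κ) (Fin κ) ℂ) + Qp) * Υp * M * Pim + Υp * D * Pim) := by
  intro lam
  have hA : Υp * B * L
      = Υp * M * Pim * S ^ 2 + Υp * D * Pim * S + Υp * K * Pim := by
    have h : Υp * (M * Pim * S ^ 2 + D * Pim * S + K * Pim) = Υp * (B * L) := by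
      rw [hPim]
    simp only [Matrix.mul_add, ← Matrix.mul_assoc] at h
    exact h.symm
  have hB : Qp ^ 2 * (Υp * M * Pim) + Qp * (Υp * D * Pim) + Υp * K * Pim = 0 := by
    have h : (Qp ^ 2 * Υp * M + Qp * Υp * D + Υp * K) * Pim
        = (Rp * Cp0 + Qp * Rp * Cp1) * Pim := by rw [hΥp]
    calc Qp ^ 2 * (Υp * M * Pim) + Qp * (Υp * D * Pim) + Υp * K * Pim
        = (Qp ^ 2 * Υp * M + Qp * Υp * D + Υp * K) * Pim := by
          simp only [Matrix.add_mul, Matrix.mul_assoc]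
      _ = (Rp * Cp0 + Qp * Rp * Cp1) * Pim := h
      _ = 0 := by
          simp only [Matrix.add_mul, Matrix.mul_assoc, h0, h1, Matrix.mul_zero, add_zero]
  have hKP : Υp * K * Pim
      = -(Qp ^ 2 * (Υp * M * Pim) + Qp * (Υp * D * Pim)) := by
    linear_combination (norm := abel) hB
  calc Υp * Pim * (lam ^ 2 • F2 + lam • F1 + (G * L - F2 * S ^ 2 - F1 * S))
      = lam ^ 2 • (Υp * Pim * F2) + lam • (Υp * Pim * F1)
        + (Υp * Pim * G * L - Υp * Pim * F2 * S ^ 2 - Υp * Pim * F1 * S) := by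
        simp only [Matrix.mul_add, Matrix.mul_sub, Matrix.mul_smul, ← Matrix.mul_assoc]
    _ = lam ^ 2 • (Υp * M * Pim) + lam • (Υp * D * Pim)
        + (Υp * B * L - Υp * M * Pim * S ^ 2 - Υp * D * Pim * S) := by
        rw [hF2, hF1, hG]
    _ = lam ^ 2 • (Υp * M * Pim) + lam • (Υp * D * Pim)
        - (Qp ^ 2 * (Υp * M * Pim) + Qp * (Υp * D * Pim)) := by
        rw [hA, hKP]; abel
    _ = (lam • (1 : Matrix (Fin κ) (Fin κ) ℂ) - Qp) *
          ((lam • (1 : Matrix (Fin κ) (Fin κ) ℂ) + Qp) * Υp * M * Pim + Υp * D * Pim) := by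
        simp only [Matrix.sub_mul, Matrix.add_mul, Matrix.smul_mul, Matrix.mul_smul, Matrix.one_mul,
          Matrix.mul_add, pow_two, Matrix.mul_assoc, smul_smul]
        module
end

section
/- Under the assumptions of the preceding factorization, every eigenvalue λ of Q_p satisfies det(λ² F_2 + λ F_1 + (G L − F_2 S² − F_1 S)) = 0, provided F_2 is square and the factorization Υ_p Π ρ(λ) = (λI − Q_p)[(λI + Q_p)Υ_p M Π + Υ_p D Π] holds with rank(Υ_p Π) = κ. -/
open Matrix

/-- If the factorization Υ_pPim ρ(λ) = (λI−Q_p)[(λI+Q_p)Υ_pMPim + Υ_pDPim]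
holds, rank(Υ_pPim) = κ, and λ is an eigenvalue of Q_p, then det ρ(λ) = 0. -/
theorem poleplacement_eigenvalues
    {n ν κ : ℕ}
    (Qp : Matrix (Fin κ) (Fin κ) ℂ)
    (Pim : Matrix (Fin n) (Fin ν) ℂ) (Υp : Matrix (Fin κ) (Fin n) ℂ)
    (M D : Matrix (Fin n) (Fin n) ℂ)
    (F1 F2 F0 : Matrix (Fin ν) (Fin ν) ℂ)
    (hfact : ∀ mu : ℂ,
      Υp * Pim * (mu ^ 2 • F2 + mu • F1 + F0)
        = (mu • (1 : Matrix (Fin κ) (Fin κ) ℂ) - Qp) *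
          ((mu • (1 : Matrix (Fin κ) (Fin κ) ℂ) + Qp) * Υp * M * Pim + Υp * D * Pim))
    (hrank : (Υp * Pim).rank = κ)
    (lam : ℂ)
    (heig : (lam • (1 : Matrix (Fin κ) (Fin κ) ℂ) - Qp).det = 0) :
    (lam ^ 2 • F2 + lam • F1 + F0).det = 0 := by
  -- left eigenvector
  obtain ⟨v, hv0, hv⟩ := Matrix.exists_vecMul_eq_zero_iff.mpr heig
  -- rows of Υp * Pim are linearly independent
  have hLI : LinearIndependent ℂ (fun i => (Υp * Pim) i) := by
    rw [linearIndependent_iff_card_eq_finrank_span, Set.finrank]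
    change _ = Module.finrank ℂ (Submodule.span ℂ (Set.range (Υp * Pim).row))
    rw [← Matrix.rank_eq_finrank_span_row, hrank, Fintype.card_fin]
  have hinj : Function.Injective (Υp * Pim).vecMul :=
    Matrix.vecMul_injective_iff.mpr hLI
  set w := v ᵥ* (Υp * Pim) with hw
  have hwne : w ≠ 0 := by
    intro h
    apply hv0
    have := hinj (a₁ := v) (a₂ := 0) (by simpa [Matrix.zero_vecMul] using h)
    exact this
  have hkey : w ᵥ* (lam ^ 2 • F2 + lam • F1 + F0) = 0 := by
    rw [hw, Matrix.vecMul_vecMul, hfact lam]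
    rw [← Matrix.vecMul_vecMul, hv, Matrix.zero_vecMul]
  exact Matrix.exists_vecMul_eq_zero_iff.mp ⟨w, hwne, hkey⟩
end

section
/- Let Π solve M Π S² + D Π S + K Π = B L and Υ solve Q² Υ M + Q Υ D + Υ K = R C_0 + Q R C_1. Then R C_0 Π + Υ D Π S + Υ M Π S² = Q(Q Υ M + Υ D − R C_1)Π + Υ B L. -/
open Matrix

/-- Key identity for two-sided moment matching:
R C₀ Pim + Υ D Pim S + Υ M Pim S² = Q(QΥM + ΥD − RC₁)Pim + Υ B L. -/
theorem twosided_steady_state_identity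
    {n p q ν : ℕ} (M D K : Matrix (Fin n) (Fin n) ℂ)
    (B : Matrix (Fin n) (Fin p) ℂ) (C0 C1 : Matrix (Fin q) (Fin n) ℂ)
    (S Q : Matrix (Fin ν) (Fin ν) ℂ)
    (L : Matrix (Fin p) (Fin ν) ℂ) (R : Matrix (Fin ν) (Fin q) ℂ)
    (Pim : Matrix (Fin n) (Fin ν) ℂ) (Υ : Matrix (Fin ν) (Fin n) ℂ)
    (hPim : M * Pim * S ^ 2 + D * Pim * S + K * Pim = B * L)
    (hΥ : Q ^ 2 * Υ * M + Q * Υ * D + Υ * K = R * C0 + Q * R * C1) :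
    R * C0 * Pim + Υ * D * Pim * S + Υ * M * Pim * S ^ 2
      = Q * (Q * Υ * M + Υ * D - R * C1) * Pim + Υ * B * L := by
  have h1 : (Q ^ 2 * Υ * M + Q * Υ * D + Υ * K) * Pim = (R * C0 + Q * R * C1) * Pim := by
    rw [hΥ]
  have h2 : Υ * (M * Pim * S ^ 2 + D * Pim * S + K * Pim) = Υ * (B * L) := by rw [hPim]
  simp only [pow_two, Matrix.add_mul, Matrix.mul_add, Matrix.sub_mul, Matrix.mul_sub,
    Matrix.mul_assoc] at h1 h2 ⊢
  linear_combination (norm := abel) h2 - h1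
end

section
/- Let 𝕃 be the Loewner matrix with entries 𝕃_{ji} = (v_j^⊤ r_i − l_j^⊤ w_i)/(β_j − α_i), where w_i = W(α_i) r_i, v_j^⊤ = l_j^⊤ W(β_j), and W(s) = C(Ms² + Ds + K)^{-1}B. Let X have columns X_i = (M α_i² + D α_i + K)^{-1} B r_i and Y have rows Y_j = l_j^⊤ C (M β_j² + D β_j + K)^{-1}. Then 𝕃 = −Λ_β Y M X − Y M X Λ_α − Y D X, where Λ_α = diag(α_i), Λ_β = diag(β_j), assuming all α_i, β_j lie outside the pole set and β_j ≠ α_i for all i, j. -/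
/-!
With `P(s) = s² M + s D + K`, the resolvent identity `P(β)⁻¹ - P(α)⁻¹ = P(β)⁻¹ (P(α) - P(β)) P(α)⁻¹`
rewrites the numerator `v_jᵀ r_i - l_jᵀ w_i` of the Loewner entry as `Y_j (P(α_i) - P(β_j)) X_i`.
Since `P(α) - P(β) = (α - β) ((α + β) M + D)`, the factor `α - β` cancels the denominator,
leaving `-(α_i + β_j) Y_j M X_i - Y_j D X_i`.
-/

open Matrix

theorem sq_smul_add_smul_add_sub {R V : Type*} [CommRing R] [AddCommGroup V] [Module R V]
    (M D K : V) (a b : R) :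
    (a ^ 2 • M + a • D + K) - (b ^ 2 • M + b • D + K) = (a - b) • ((a + b) • M + D) := by
  module

namespace Matrix

variable {R : Type*} [CommRing R] {m n k p q : Type*} [Fintype n] [Fintype p] [Fintype q]

theorem of_mul_mul_of_apply (y : m → n → R) (A : Matrix n n R) (x : k → n → R) (j : m) (i : k) :
    (of y * A * of fun a i => x i a) j i = y j ⬝ᵥ (A *ᵥ x i) := by
  rw [Matrix.mul_assoc]
  rfl

variable [DecidableEq n]

theorem dotProduct_transfer_sub (P Q : Matrix n n R) (hP : IsUnit P.det) (hQ : IsUnit Q.det)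
    (B : Matrix n p R) (C : Matrix q n R) (l : q → R) (r : p → R) :
    (l ᵥ* (C * Q⁻¹ * B)) ⬝ᵥ r - l ⬝ᵥ ((C * P⁻¹ * B) *ᵥ r)
      = (l ᵥ* (C * Q⁻¹)) ⬝ᵥ ((P - Q) *ᵥ ((P⁻¹ * B) *ᵥ r)) := by
  have hinv : Q⁻¹ - P⁻¹ = Q⁻¹ * (P - Q) * P⁻¹ :=
    inv_sub_inv (iff_of_true ((isUnit_iff_isUnit_det Q).2 hQ) ((isUnit_iff_isUnit_det P).2 hP))
  rw [← dotProduct_mulVec, ← dotProduct_sub, ← sub_mulVec, ← Matrix.sub_mul, ← Matrix.mul_sub,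
    hinv]
  simp only [dotProduct_mulVec, vecMul_vecMul, mulVec_mulVec, Matrix.mul_assoc]

theorem loewner_entry_quadratic {𝕜 : Type*} [Field 𝕜] (M D K : Matrix n n 𝕜)
    (B : Matrix n p 𝕜) (C : Matrix q n 𝕜) (l : q → 𝕜) (r : p → 𝕜) {a b : 𝕜}
    (ha : (a ^ 2 • M + a • D + K).det ≠ 0) (hb : (b ^ 2 • M + b • D + K).det ≠ 0) (hab : b ≠ a) :
    let y := l ᵥ* (C * (b ^ 2 • M + b • D + K)⁻¹)
    let x := ((a ^ 2 • M + a • D + K)⁻¹ * B) *ᵥ r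
    ((l ᵥ* (C * (b ^ 2 • M + b • D + K)⁻¹ * B)) ⬝ᵥ r
        - l ⬝ᵥ ((C * (a ^ 2 • M + a • D + K)⁻¹ * B) *ᵥ r)) / (b - a)
      = -(b * y ⬝ᵥ (M *ᵥ x)) - y ⬝ᵥ (M *ᵥ x) * a - y ⬝ᵥ (D *ᵥ x) := by
  intro y x
  rw [dotProduct_transfer_sub _ _ ha.isUnit hb.isUnit, sq_smul_add_smul_add_sub, smul_mulVec,
    dotProduct_smul, add_mulVec, smul_mulVec, dotProduct_add, dotProduct_smul, smul_eq_mul,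
    smul_eq_mul, div_eq_iff (sub_ne_zero.2 hab)]
  ring

end Matrix

/-- The second-order Loewner matrix factors as
𝕃 = −Λ_β Y M X − Y M X Λ_α − Y D X. -/
theorem loewner_factorization
    {n p q ν : ℕ} (M D K : Matrix (Fin n) (Fin n) ℂ)
    (B : Matrix (Fin n) (Fin p) ℂ) (C : Matrix (Fin q) (Fin n) ℂ)
    (α β : Fin ν → ℂ) (r : Fin ν → Fin p → ℂ) (l : Fin ν → Fin q → ℂ)
    (w : Fin ν → Fin q → ℂ) (v : Fin ν → Fin p → ℂ)
    (hαdet : ∀ i, ((α i) ^ 2 • M + (α i) • D + K).det ≠ 0)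
    (hβdet : ∀ j, ((β j) ^ 2 • M + (β j) • D + K).det ≠ 0)
    (hαβ : ∀ i j, β j ≠ α i)
    (hw : ∀ i, w i = (C * ((α i) ^ 2 • M + (α i) • D + K)⁻¹ * B) *ᵥ r i)
    (hv : ∀ j, v j = l j ᵥ* (C * ((β j) ^ 2 • M + (β j) • D + K)⁻¹ * B))
    (X : Matrix (Fin n) (Fin ν) ℂ)
    (hX : X = Matrix.of fun a i => ((((α i) ^ 2 • M + (α i) • D + K)⁻¹ * B) *ᵥ r i) a)
    (Y : Matrix (Fin ν) (Fin n) ℂ)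
    (hY : Y = Matrix.of fun j b => (l j ᵥ* (C * ((β j) ^ 2 • M + (β j) • D + K)⁻¹)) b)
    (𝕃 : Matrix (Fin ν) (Fin ν) ℂ)
    (h𝕃 : 𝕃 = Matrix.of fun j i => (v j ⬝ᵥ r i - l j ⬝ᵥ w i) / (β j - α i)) :
    𝕃 = -(Matrix.diagonal β * Y * M * X) - Y * M * X * Matrix.diagonal α - Y * D * X := by
  rw [show diagonal β * Y * M * X = diagonal β * (Y * M * X) by simp only [Matrix.mul_assoc]]
  subst hX hY h𝕃
  ext j i
  simp only [of_apply, Matrix.sub_apply, Matrix.neg_apply, diagonal_mul, mul_diagonal,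
    of_mul_mul_of_apply, hv, hw]
  exact loewner_entry_quadratic M D K B C (l j) (r i) (hαdet i) (hβdet j) (hαβ i j)
end

section
/- With the same data, the shifted Loewner matrix 𝕃_s with entries (β_j v_j^⊤ r_i − α_i l_j^⊤ w_i)/(β_j − α_i) satisfies 𝕃_s = −Λ_β Y M X Λ_α + Y K X, and the double-shifted Loewner matrix 𝕃_{ss} with entries (β_j² v_j^⊤ r_i − α_i² l_j^⊤ w_i)/(β_j − α_i) satisfies 𝕃_{ss} = Λ_β Y D X Λ_α + Λ_β Y K X + Y K X Λ_α. -/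
open Matrix

/-- The shifted and double-shifted second-order Loewner matrices factor as
𝕃_s = −Λ_β Y M X Λ_α + Y K X and 𝕃_ss = Λ_β Y D X Λ_α + Λ_β Y K X + Y K X Λ_α. -/
theorem shifted_loewner_factorization
    {n p q ν : ℕ} (M D K : Matrix (Fin n) (Fin n) ℂ)
    (B : Matrix (Fin n) (Fin p) ℂ) (C : Matrix (Fin q) (Fin n) ℂ)
    (α β : Fin ν → ℂ) (r : Fin ν → Fin p → ℂ) (l : Fin ν → Fin q → ℂ)
    (w : Fin ν → Fin q → ℂ) (v : Fin ν → Fin p → ℂ)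
    (hαdet : ∀ i, ((α i) ^ 2 • M + (α i) • D + K).det ≠ 0)
    (hβdet : ∀ j, ((β j) ^ 2 • M + (β j) • D + K).det ≠ 0)
    (hαβ : ∀ i j, β j ≠ α i)
    (hw : ∀ i, w i = (C * ((α i) ^ 2 • M + (α i) • D + K)⁻¹ * B) *ᵥ r i)
    (hv : ∀ j, v j = l j ᵥ* (C * ((β j) ^ 2 • M + (β j) • D + K)⁻¹ * B))
    (X : Matrix (Fin n) (Fin ν) ℂ)
    (hX : X = Matrix.of fun a i => ((((α i) ^ 2 • M + (α i) • D + K)⁻¹ * B) *ᵥ r i) a)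
    (Y : Matrix (Fin ν) (Fin n) ℂ)
    (hY : Y = Matrix.of fun j b => (l j ᵥ* (C * ((β j) ^ 2 • M + (β j) • D + K)⁻¹)) b)
    (𝕃s 𝕃ss : Matrix (Fin ν) (Fin ν) ℂ)
    (h𝕃s : 𝕃s = Matrix.of fun j i =>
      (β j * (v j ⬝ᵥ r i) - α i * (l j ⬝ᵥ w i)) / (β j - α i))
    (h𝕃ss : 𝕃ss = Matrix.of fun j i =>
      ((β j) ^ 2 * (v j ⬝ᵥ r i) - (α i) ^ 2 * (l j ⬝ᵥ w i)) / (β j - α i)) :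
    𝕃s = -(Matrix.diagonal β * Y * M * X * Matrix.diagonal α) + Y * K * X
    ∧ 𝕃ss = Matrix.diagonal β * Y * D * X * Matrix.diagonal α
        + Matrix.diagonal β * Y * K * X + Y * K * X * Matrix.diagonal α := by

  have hne : ∀ i j, β j - α i ≠ 0 := fun i j => sub_ne_zero.mpr (hαβ i j)
  set Pα : Fin ν → Matrix (Fin n) (Fin n) ℂ :=
    fun i => (α i) ^ 2 • M + (α i) • D + K with hPα
  set Pβ : Fin ν → Matrix (Fin n) (Fin n) ℂ :=
    fun j => (β j) ^ 2 • M + (β j) • D + K with hPβ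
  have hαinv : ∀ i, Pα i * (Pα i)⁻¹ = 1 :=
    fun i => Matrix.mul_nonsing_inv _ (isUnit_iff_ne_zero.mpr (hαdet i))
  have hβinv : ∀ j, (Pβ j)⁻¹ * Pβ j = 1 :=
    fun j => Matrix.nonsing_inv_mul _ (isUnit_iff_ne_zero.mpr (hβdet j))
  set y : Fin ν → Fin n → ℂ := fun j => l j ᵥ* (C * (Pβ j)⁻¹) with hy
  set x : Fin ν → Fin n → ℂ := fun i => ((Pα i)⁻¹ * B) *ᵥ r i with hx
  -- column of A * X
  have col : ∀ (A : Matrix (Fin n) (Fin n) ℂ) (k : Fin n) (i : Fin ν),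
      (A * X) k i = (A *ᵥ x i) k := by
    intro A k i
    subst hX
    simp [Matrix.mul_apply, Matrix.mulVec, dotProduct, hx, hPα]
  have hYAX : ∀ (A : Matrix (Fin n) (Fin n) ℂ) (j i : Fin ν),
      (Y * A * X) j i = y j ⬝ᵥ (A *ᵥ x i) := by
    intro A j i
    rw [Matrix.mul_assoc, Matrix.mul_apply']
    have h1 : (fun k => (A * X) k i) = A *ᵥ x i := funext fun k => col A k i
    have h2 : (fun k => Y j k) = y j := by subst hY; rfl
    rw [h1, show Y j = y j from h2]
  have hv' : ∀ j, v j = y j ᵥ* B := by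
    intro j
    rw [hv j, ← Matrix.vecMul_vecMul]
  have hlC : ∀ j, y j ᵥ* Pβ j = l j ᵥ* C := by
    intro j
    rw [hy]
    simp only [Matrix.vecMul_vecMul, Matrix.mul_assoc, hβinv j, Matrix.mul_one]
  have hw' : ∀ i, w i = C *ᵥ x i := by
    intro i
    rw [hw i, Matrix.mul_assoc, ← Matrix.mulVec_mulVec]
  have hPx : ∀ i, Pα i *ᵥ x i = B *ᵥ r i := by
    intro i
    rw [hx]
    simp only [Matrix.mulVec_mulVec, ← Matrix.mul_assoc, hαinv i, Matrix.one_mul]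
  -- scalar expansion
  have expand : ∀ (c : ℂ) (j i : Fin ν),
      y j ⬝ᵥ ((c ^ 2 • M + c • D + K) *ᵥ x i)
        = c ^ 2 * (y j ⬝ᵥ (M *ᵥ x i)) + c * (y j ⬝ᵥ (D *ᵥ x i))
            + (y j ⬝ᵥ (K *ᵥ x i)) := by
    intro c j i
    simp [Matrix.add_mulVec, Matrix.smul_mulVec, dotProduct_add,
      dotProduct_smul, smul_eq_mul]
  have hvr : ∀ j i, v j ⬝ᵥ r i
      = (α i) ^ 2 * (y j ⬝ᵥ (M *ᵥ x i)) + α i * (y j ⬝ᵥ (D *ᵥ x i))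
          + (y j ⬝ᵥ (K *ᵥ x i)) := by
    intro j i
    rw [hv' j, ← Matrix.dotProduct_mulVec, ← hPx i, expand]
  have hlw : ∀ j i, l j ⬝ᵥ w i
      = (β j) ^ 2 * (y j ⬝ᵥ (M *ᵥ x i)) + β j * (y j ⬝ᵥ (D *ᵥ x i))
          + (y j ⬝ᵥ (K *ᵥ x i)) := by
    intro j i
    rw [hw' i, Matrix.dotProduct_mulVec, ← hlC j, ← Matrix.dotProduct_mulVec, expand]
  constructor
  · subst h𝕃s
    ext j i
    simp only [Matrix.of_apply, Matrix.add_apply, Matrix.neg_apply]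
    rw [div_eq_iff (hne i j)]
    have d1 : (Matrix.diagonal β * Y * M * X * Matrix.diagonal α) j i
        = β j * (y j ⬝ᵥ (M *ᵥ x i)) * α i := by
      rw [Matrix.mul_diagonal]
      congr 1
      rw [show Matrix.diagonal β * Y * M * X = Matrix.diagonal β * (Y * M * X) by
        simp only [Matrix.mul_assoc], Matrix.diagonal_mul, hYAX M j i]
    have d2 : (Y * K * X) j i = y j ⬝ᵥ (K *ᵥ x i) := hYAX K j i
    rw [hvr, hlw, d1, d2]
    ring
  · subst h𝕃ss
    ext j i
    simp only [Matrix.of_apply, Matrix.add_apply]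
    rw [div_eq_iff (hne i j)]
    have d1 : (Matrix.diagonal β * Y * D * X * Matrix.diagonal α) j i
        = β j * (y j ⬝ᵥ (D *ᵥ x i)) * α i := by
      rw [Matrix.mul_diagonal]
      congr 1
      rw [show Matrix.diagonal β * Y * D * X = Matrix.diagonal β * (Y * D * X) by
        simp only [Matrix.mul_assoc], Matrix.diagonal_mul, hYAX D j i]
    have d2 : (Matrix.diagonal β * Y * K * X) j i = β j * (y j ⬝ᵥ (K *ᵥ x i)) := by
      rw [show Matrix.diagonal β * Y * K * X = Matrix.diagonal β * (Y * K * X) by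
        simp only [Matrix.mul_assoc], Matrix.diagonal_mul, hYAX K j i]
    have d3 : (Y * K * X * Matrix.diagonal α) j i = (y j ⬝ᵥ (K *ᵥ x i)) * α i := by
      rw [Matrix.mul_diagonal, hYAX K j i]
    rw [hvr, hlw, d1, d2, d3]
    ring
end

section
/- Assume −𝕃Λ_α + 𝕃_s = V R and −Λ_β 𝕃 + 𝕃_s = L W. For any square matrix M̂, the second-order model with mass M̂, damping −𝕃 − Λ_β M̂ − M̂ Λ_α, and stiffness 𝕃_s + Λ_β M̂ Λ_α satisfies the two Sylvester interpolation conditions: M̂ Λ_α² + (−𝕃 − Λ_β M̂ − M̂ Λ_α)Λ_α + (𝕃_s + Λ_β M̂ Λ_α) = V R, and Λ_β² M̂ + Λ_β(−𝕃 − Λ_β M̂ − M̂ Λ_α) + (𝕃_s + Λ_β M̂ Λ_α) = L W. -/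
open Matrix

/-- For any square M̂, the second-order model with mass M̂, damping
−𝕃 − Λ_βM̂ − M̂Λ_α, and stiffness 𝕃_s + Λ_βM̂Λ_α satisfies both tangential Sylvester
interpolation conditions. -/
theorem loewner_family_interpolation
    {p q ν : ℕ} (𝕃 𝕃s Λα Λβ Mhat : Matrix (Fin ν) (Fin ν) ℂ)
    (V : Matrix (Fin ν) (Fin p) ℂ) (R : Matrix (Fin p) (Fin ν) ℂ)
    (L : Matrix (Fin ν) (Fin q) ℂ) (W : Matrix (Fin q) (Fin ν) ℂ)
    (h1 : -(𝕃 * Λα) + 𝕃s = V * R)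
    (h2 : -(Λβ * 𝕃) + 𝕃s = L * W) :
    Mhat * Λα ^ 2 + (-𝕃 - Λβ * Mhat - Mhat * Λα) * Λα + (𝕃s + Λβ * Mhat * Λα) = V * R
    ∧ Λβ ^ 2 * Mhat + Λβ * (-𝕃 - Λβ * Mhat - Mhat * Λα) + (𝕃s + Λβ * Mhat * Λα)
        = L * W := by
  constructor
  · rw [← h1]; noncomm_ring
  · rw [← h2]; noncomm_ring
end
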